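/- arXiv:1902.05086 — 4 statements merged into one kernel-verified Lean document; each statement's English description precedes it below -/
import Mathlib

section
/- Let A ∈ 𝕂^{N×N}, B ∈ 𝕂^{N×m}, and D > 0. Then the pair (A, e^{−DA} B) satisfies the Kalman rank condition if and only if the pair (A, B) satisfies the Kalman rank condition. -/
open Matrix

/-- The controllability (Kalman) matrix `[B, AB, …, A^{N−1}B]` of a pair `(A, B)`,
as a matrix indexed by `Fin N × Fin m` columns. -/
def ctrbMatrix {𝕂 : Type*} [RCLike 𝕂] {N m : ℕ}
    (A : Matrix (Fin N) (Fin N) 𝕂) (B : Matrix (Fin N) (Fin m) 𝕂) :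
    Matrix (Fin N) (Fin N × Fin m) 𝕂 :=
  Matrix.of fun i jk => ((A ^ (jk.1 : ℕ)) * B) i jk.2

section

variable {𝕂 : Type*} [RCLike 𝕂] {N m : ℕ}
  {A E : Matrix (Fin N) (Fin N) 𝕂} (B : Matrix (Fin N) (Fin m) 𝕂)

theorem ctrbMatrix_mul_of_commute (h : Commute E A) :
    ctrbMatrix A (E * B) = E * ctrbMatrix A B := by
  ext i ⟨k, j⟩
  have hk : A ^ (k : ℕ) * (E * B) = E * (A ^ (k : ℕ) * B) := by
    rw [← Matrix.mul_assoc, ((h.pow_right k).eq).symm, Matrix.mul_assoc]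
  simpa only [ctrbMatrix, of_apply, mul_apply] using congrFun (congrFun hk i) j

theorem rank_ctrbMatrix_mul_of_commute (h : Commute E A) (hE : IsUnit E.det) :
    (ctrbMatrix A (E * B)).rank = (ctrbMatrix A B).rank := by
  rw [ctrbMatrix_mul_of_commute B h, rank_mul_eq_right_of_isUnit_det E _ hE]

end

theorem stmt_3_general {𝕂 : Type*} [RCLike 𝕂] (N m : ℕ)
    (A : Matrix (Fin N) (Fin N) 𝕂) (B : Matrix (Fin N) (Fin m) 𝕂)
    (D : ℝ) :
    (ctrbMatrix A (NormedSpace.exp ((-(D : 𝕂)) • A) * B)).rank = N ↔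
      (ctrbMatrix A B).rank = N := by
  have hcomm : Commute (NormedSpace.exp ((-(D : 𝕂)) • A)) A :=
    ((Commute.refl A).smul_left _).exp_left
  have hunit : IsUnit (NormedSpace.exp ((-(D : 𝕂)) • A)).det :=
    (isUnit_iff_isUnit_det _).mp (isUnit_exp _)
  rw [rank_ctrbMatrix_mul_of_commute B hcomm hunit]

/-- `(A, e^{−DA} B)` satisfies the Kalman rank condition iff `(A, B)` does. -/
theorem stmt_3 {𝕂 : Type*} [RCLike 𝕂] (N m : ℕ)
    (A : Matrix (Fin N) (Fin N) 𝕂) (B : Matrix (Fin N) (Fin m) 𝕂)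
    (D : ℝ) (hD : 0 < D) :
    (ctrbMatrix A (NormedSpace.exp ((-(D : 𝕂)) • A) * B)).rank = N ↔
      (ctrbMatrix A B).rank = N :=
  stmt_3_general N m A B D
end

section
/- Let A be diagonalizable with pairwise distinct eigenvalue-blocks: assume A ∈ 𝕂^{N₀×N₀} is diagonal with diagonal (λ_1, …, λ_{N₀}) arranged so that there are p blocks of sizes n_1, …, n_p (n_1 + … + n_p = N₀) of equal eigenvalues, with distinct eigenvalues across blocks. Let B = (b_{n,k}) ∈ 𝕂^{N₀×m}. Then (A, B) satisfies the Kalman rank condition if and only if for every block l, the submatrix of B consisting of the rows of the l-th block has rank n_l. In particular a necessary condition is n_l ≤ m for all l. -/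
/-!
For diagonal `A = diag (μ ∘ c)` the `(j, k)` entry of row `i` of the Kalman matrix is
`μ (c i) ^ j * b i k`. So row `i` is the image of the vector supported on block `c i` with
value `b i` under `w ↦ (∑ l, μ l ^ j * w l k)_{j,k}`, which is injective because the
Vandermonde matrix of the distinct `μ l` is invertible (there are enough powers `j < N₀` since
every block is nonempty, so `p ≤ N₀`). Hence the rows of the Kalman matrix are independent iff
these block vectors are, i.e. iff within each block the rows of `B` are independent.
-/

open Matrix

theorem Matrix.rank_eq_card_iff_linearIndependent_row {K m n : Type*} [Field K] [Fintype m]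
    [Fintype n] (M : Matrix m n K) : M.rank = Fintype.card m ↔ LinearIndependent K M.row := by
  rw [linearIndependent_iff_card_eq_finrank_span, Set.finrank, rank_eq_finrank_span_row, eq_comm]

theorem Pi.linearIndependent_single_iff {R η : Type*} {ιs : η → Type*} {Ms : η → Type*}
    [Semiring R] [∀ i, AddCommMonoid (Ms i)] [∀ i, Module R (Ms i)] [DecidableEq η]
    {v : ∀ j, ιs j → Ms j} :
    LinearIndependent R (fun ji : Σ j, ιs j ↦ Pi.single ji.1 (v ji.1 ji.2)) ↔
      ∀ j, LinearIndependent R (v j) :=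
  ⟨fun h j ↦ (h.comp _ sigma_mk_injective).of_comp (LinearMap.single R Ms j),
    Pi.linearIndependent_single v⟩

theorem linearIndependent_pi_single_iff_fiberwise {R ι κ M : Type*} [Semiring R]
    [AddCommMonoid M] [Module R M] [DecidableEq κ] {c : ι → κ} {f : ι → M} :
    LinearIndependent R (fun i ↦ Pi.single (M := fun _ ↦ M) (c i) (f i)) ↔
      ∀ l, LinearIndependent R (fun i : {i // c i = l} ↦ f i) := by
  rw [← linearIndependent_equiv (Equiv.sigmaFiberEquiv c), ← Pi.linearIndependent_single_iff]
  refine linearIndependent_equiv' (Equiv.refl _) ?_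
  ext ⟨l, i, rfl⟩
  rfl

def vandermondeMap {R : Type*} [CommRing R] {p : ℕ} (μ : Fin p → R) (N : ℕ) (n : Type*) :
    (Fin p → n → R) →ₗ[R] (Fin N × n → R) where
  toFun w jk := ∑ l, μ l ^ (jk.1 : ℕ) * w l jk.2
  map_add' w w' := by ext; simp [mul_add, Finset.sum_add_distrib]
  map_smul' a w := by ext; simp [Finset.mul_sum, mul_left_comm]

theorem vandermondeMap_apply {R : Type*} [CommRing R] {p : ℕ} (μ : Fin p → R) (N : ℕ)
    (n : Type*) (w : Fin p → n → R) (jk : Fin N × n) :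
    vandermondeMap μ N n w jk = ∑ l, μ l ^ (jk.1 : ℕ) * w l jk.2 :=
  rfl

theorem vandermondeMap_injective {R : Type*} [CommRing R] [IsDomain R] {p : ℕ} {μ : Fin p → R}
    (hμ : Function.Injective μ) {N : ℕ} (hpN : p ≤ N) (n : Type*) :
    Function.Injective (vandermondeMap μ N n) := by
  rw [← LinearMap.ker_eq_bot, LinearMap.ker_eq_bot']
  intro w hw
  ext l k
  have hcol : (fun l ↦ w l k) = 0 := by
    refine eq_zero_of_forall_pow_sum_mul_pow_eq_zero hμ fun j ↦ ?_
    have := congrFun hw (Fin.castLE hpN j, k)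
    rw [vandermondeMap_apply] at this
    simpa [mul_comm] using this
  exact congrFun hcol l

theorem ctrbMatrix_diagonal_row {𝕂 : Type*} [RCLike 𝕂] {N m p : ℕ} (μ : Fin p → 𝕂)
    (c : Fin N → Fin p) (B : Matrix (Fin N) (Fin m) 𝕂) (i : Fin N) :
    (ctrbMatrix (diagonal fun i ↦ μ (c i)) B).row i =
      vandermondeMap μ N (Fin m) (Pi.single (c i) (B.row i)) := by
  ext jk
  rw [vandermondeMap_apply, Fintype.sum_eq_single (c i) fun l hl ↦ by simp [hl]]
  simp [ctrbMatrix, diagonal_pow]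

/-- PBH-type criterion for a diagonal `A` whose diagonal entries come in
blocks of equal eigenvalues (block assignment `c : Fin N₀ → Fin p`, distinct eigenvalues
`μ : Fin p → 𝕂` across blocks, each block nonempty).  `(A, B)` satisfies the Kalman rank
condition iff for every block `l` the submatrix of `B` made of the rows of that block has
full row rank `n_l = card {i // c i = l}`; in particular `n_l ≤ m` is necessary. -/
theorem stmt_4 {𝕂 : Type*} [RCLike 𝕂] (N₀ m p : ℕ)
    (μ : Fin p → 𝕂) (hμ : Function.Injective μ)
    (c : Fin N₀ → Fin p) (hc : Function.Surjective c)
    (B : Matrix (Fin N₀) (Fin m) 𝕂) :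
    ((ctrbMatrix (Matrix.diagonal fun i => μ (c i)) B).rank = N₀ ↔
      ∀ l : Fin p,
        (Matrix.of fun (i : {i : Fin N₀ // c i = l}) (k : Fin m) => B i.1 k).rank
          = Fintype.card {i : Fin N₀ // c i = l}) ∧
    ((ctrbMatrix (Matrix.diagonal fun i => μ (c i)) B).rank = N₀ →
      ∀ l : Fin p, Fintype.card {i : Fin N₀ // c i = l} ≤ m) := by
  have hpN : p ≤ N₀ := by simpa using Fintype.card_le_of_surjective c hc
  set K := ctrbMatrix (diagonal fun i ↦ μ (c i)) B
  have kalman : K.rank = N₀ ↔ ∀ l,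
      (Matrix.of fun (i : {i // c i = l}) k ↦ B i.1 k).rank = Fintype.card {i // c i = l} := by
    have hrows := rank_eq_card_iff_linearIndependent_row K
    rw [Fintype.card_fin] at hrows
    simp only [hrows, rank_eq_card_iff_linearIndependent_row]
    rw [funext (ctrbMatrix_diagonal_row μ c B), ← Function.comp_def,
      (vandermondeMap μ N₀ (Fin m)).linearIndependent_iff_of_injOn
        (vandermondeMap_injective hμ hpN _).injOn, linearIndependent_pi_single_iff_fiberwise]
    rfl
  refine ⟨kalman, fun h l ↦ ?_⟩
  simpa [kalman.mp h l] using rank_le_card_width (Matrix.of fun (i : {i // c i = l}) k ↦ B i.1 k)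
end

section
/- Let A ∈ 𝕂^{N₀×N₀}, B ∈ 𝕂^{N₀×m}, and suppose Y : ℝ₊ → 𝕂^{N₀} is C¹ and satisfies Y'(t) = A Y(t) + B u(t−D) + d(t) for a continuous input u : [−D, ∞) → 𝕂^m and continuous d. Define the Artstein transform Z(t) = Y(t) + ∫_{t−D}^{t} e^{(t−s−D)A} B u(s) ds. Then Z is C¹ and satisfies Z'(t) = A Z(t) + e^{−DA} B u(t) + d(t) for all t ≥ 0. -/
/-!
Since `e^{(t-s-D)A} = e^{tA} e^{(-s-D)A}`, the integral term of the Artstein transform is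
`e^{tA} W(t)` with `W(t) = ∫_{t-D}^t e^{(-s-D)A} B u(s) ds` a moving-window integral of a
continuous function. The product rule and the fundamental theorem of calculus at both ends of the
window give its derivative `A (e^{tA} W(t)) + e^{-DA} B u(t) - B u(t-D)`, and the last term
cancels the delayed input in `Y'`.
-/

open Matrix intervalIntegral Set NormedSpace

section WindowIntegral

variable {E : Type*} [NormedAddCommGroup E] {f : ℝ → E} {a b c D t : ℝ}

theorem ContinuousOn.intervalIntegrable_of_Ici (hf : ContinuousOn f (Ici a)) (hb : a ≤ b)
    (hc : a ≤ c) : IntervalIntegrable f MeasureTheory.volume b c :=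
  (hf.mono fun _ hs => le_trans (le_inf hb hc) hs.1).intervalIntegrable

variable [NormedSpace ℝ E] [CompleteSpace E]

theorem ContinuousOn.hasDerivWithinAt_integral_Ici (hf : ContinuousOn f (Ici a)) (hb : a ≤ b) :
    HasDerivWithinAt (fun τ => ∫ s in a..τ, f s) (f b) (Ici a) b := by
  have hint := hf.intervalIntegrable_of_Ici le_rfl hb
  rcases hb.eq_or_lt with rfl | hab
  · exact integral_hasDerivWithinAt_right hint
      ((hf.mono Ioi_subset_Ici_self).stronglyMeasurableAtFilter_nhdsWithin measurableSet_Ioi _)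
      ((hf _ self_mem_Ici).mono Ioi_subset_Ici_self)
  · exact (integral_hasDerivAt_right hint
      ((hf.mono Ioi_subset_Ici_self).stronglyMeasurableAtFilter isOpen_Ioi b hab)
      (hf.continuousAt (Ici_mem_nhds hab))).hasDerivWithinAt

theorem ContinuousOn.hasDerivWithinAt_integral_sub_const_self (hf : ContinuousOn f (Ici a))
    (hD : 0 ≤ D) (hab : a + D ≤ b) (ht : b ≤ t) :
    HasDerivWithinAt (fun τ => ∫ s in (τ - D)..τ, f s) (f t - f (t - D)) (Ici b) t := by
  have hsplit : ∀ τ ∈ Ici b,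
      ∫ s in (τ - D)..τ, f s = (∫ s in a..τ, f s) - ∫ s in a..(τ - D), f s := fun τ hτ =>
    (integral_interval_sub_left (hf.intervalIntegrable_of_Ici le_rfl (by linarith [mem_Ici.1 hτ]))
      (hf.intervalIntegrable_of_Ici le_rfl (by linarith [mem_Ici.1 hτ]))).symm
  have hmaps : MapsTo (fun τ => τ - D) (Ici b) (Ici a) := fun τ hτ => by
    simp only [mem_Ici] at hτ ⊢; linarith
  have hlower : HasDerivWithinAt (fun τ => ∫ s in a..(τ - D), f s) (f (t - D)) (Ici b) t := by
    simpa [Function.comp_def] using (hf.hasDerivWithinAt_integral_Ici (b := t - D)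
      (by linarith)).scomp t ((hasDerivAt_id t).sub_const D).hasDerivWithinAt hmaps
  have hupper : HasDerivWithinAt (fun τ => ∫ s in a..τ, f s) (f t) (Ici b) t :=
    (hf.hasDerivWithinAt_integral_Ici (by linarith)).mono (Ici_subset_Ici.2 (by linarith))
  exact (hupper.sub hlower).congr hsplit (hsplit t ht)

end WindowIntegral

section MatrixCalculus

variable {𝕂 : Type*} [RCLike 𝕂] {m n : Type*} [Fintype m] [Fintype n]

theorem Matrix.mulVec_intervalIntegral (M : Matrix m n 𝕂) {f : ℝ → n → 𝕂} {a b : ℝ}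
    (hf : IntervalIntegrable f MeasureTheory.volume a b) :
    M *ᵥ ∫ s in a..b, f s = ∫ s in a..b, M *ᵥ f s :=
  ((Matrix.mulVecLin M).toContinuousLinearMap.intervalIntegral_comp_comm hf).symm

-- Matrices carry no canonical norm; the operator norm is opened only inside proofs, so that the
-- statements are about the plain product topology on matrices.
theorem HasDerivWithinAt.matrix_mulVec {M : ℝ → Matrix m n 𝕂} {v : ℝ → n → 𝕂}
    {M' : Matrix m n 𝕂} {v' : n → 𝕂} {s : Set ℝ} {t : ℝ}
    (hM : HasDerivWithinAt M M' s t) (hv : HasDerivWithinAt v v' s t) :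
    HasDerivWithinAt (fun τ => M τ *ᵥ v τ) (M t *ᵥ v' + M' *ᵥ v t) s t := by
  open scoped Matrix.Norms.Operator in
  exact (Matrix.mulVecBilin (A := 𝕂) ℝ ℝ).toContinuousBilinearMap.hasDerivWithinAt_of_bilinear hM hv

variable [DecidableEq n]

theorem Matrix.hasDerivWithinAt_exp_smul_const (A : Matrix n n 𝕂) (s : Set ℝ) (t : ℝ) :
    HasDerivWithinAt (fun τ : ℝ => exp (τ • A)) (A * exp (t • A)) s t := by
  open scoped Matrix.Norms.Operator in exact (hasDerivAt_exp_smul_const' A t).hasDerivWithinAt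

theorem Matrix.exp_smul_mulVec_exp_smul_mulVec (A : Matrix n n 𝕂) (a b : ℝ) (w : n → 𝕂) :
    exp (a • A) *ᵥ (exp (b • A) *ᵥ w) = exp ((a + b) • A) *ᵥ w := by
  rw [mulVec_mulVec, add_smul,
    Matrix.exp_add_of_commute _ _ (((Commute.refl A).smul_left a).smul_right b)]

end MatrixCalculus

section Artstein

variable {𝕂 : Type*} [RCLike 𝕂] {n : Type*} [Fintype n] [DecidableEq n]

noncomputable def artsteinIntegral (A : Matrix n n 𝕂) (D : ℝ) (v : ℝ → n → 𝕂) (t : ℝ) : n → 𝕂 :=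
  ∫ s in (t - D)..t, exp (((t - s - D : ℝ) : 𝕂) • A) *ᵥ v s

theorem artsteinIntegral_eq_exp_smul_mulVec (A : Matrix n n 𝕂) (D : ℝ) {v : ℝ → n → 𝕂} {t : ℝ}
    (hv : IntervalIntegrable (fun s => exp ((-s - D) • A) *ᵥ v s) MeasureTheory.volume (t - D) t) :
    artsteinIntegral A D v t = exp (t • A) *ᵥ ∫ s in (t - D)..t, exp ((-s - D) • A) *ᵥ v s := by
  rw [Matrix.mulVec_intervalIntegral _ hv, artsteinIntegral]
  refine integral_congr fun s _ => ?_
  rw [exp_smul_mulVec_exp_smul_mulVec, RCLike.real_smul_eq_coe_smul (K := 𝕂)]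
  congr 4
  ring

theorem hasDerivWithinAt_artsteinIntegral (A : Matrix n n 𝕂) {D t : ℝ} {v : ℝ → n → 𝕂}
    (hD : 0 ≤ D) (hv : ContinuousOn v (Ici (-D))) (ht : 0 ≤ t) :
    HasDerivWithinAt (artsteinIntegral A D v)
      (A *ᵥ artsteinIntegral A D v t + exp ((-D : 𝕂) • A) *ᵥ v t - v (t - D)) (Ici 0) t := by
  set g := fun s => exp ((-s - D) • A) *ᵥ v s
  have hexp : Continuous fun s : ℝ => exp ((-s - D) • A) := by
    open scoped Matrix.Norms.Operator in fun_prop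
  have hg : ContinuousOn g (Ici (-D)) :=
    (continuous_fst.matrix_mulVec continuous_snd).comp_continuousOn (hexp.continuousOn.prodMk hv)
  have hfactor : ∀ τ ∈ Ici (0 : ℝ),
      artsteinIntegral A D v τ = exp (τ • A) *ᵥ ∫ s in (τ - D)..τ, g s := fun τ hτ =>
    artsteinIntegral_eq_exp_smul_mulVec A D <|
      hg.intervalIntegrable_of_Ici (by linarith [mem_Ici.1 hτ]) (by linarith [mem_Ici.1 hτ])
  have hprod := (hasDerivWithinAt_exp_smul_const A (Ici 0) t).matrix_mulVec
    (hg.hasDerivWithinAt_integral_sub_const_self hD (by simp) ht)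
  refine (hprod.congr hfactor (hfactor t ht)).congr_deriv ?_
  have hnow : t + (-t - D) = -D := by ring
  have hdelayed : t + (-(t - D) - D) = 0 := by ring
  rw [← mulVec_mulVec, ← hfactor t ht, mulVec_sub]
  simp only [g]
  rw [exp_smul_mulVec_exp_smul_mulVec, exp_smul_mulVec_exp_smul_mulVec, hnow, hdelayed, zero_smul,
    exp_zero, one_mulVec, RCLike.real_smul_eq_coe_smul (K := 𝕂), RCLike.ofReal_neg]
  abel

end Artstein

theorem stmt_6_general {𝕂 : Type*} [RCLike 𝕂] (N₀ m : ℕ) (D : ℝ) (hD : 0 < D)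
    (A : Matrix (Fin N₀) (Fin N₀) 𝕂) (B : Matrix (Fin N₀) (Fin m) 𝕂)
    (Y : ℝ → Fin N₀ → 𝕂) (u : ℝ → Fin m → 𝕂) (d : ℝ → Fin N₀ → 𝕂)
    (hu : ContinuousOn u (Set.Ici (-D)))
    (hY : ∀ t ≥ (0 : ℝ),
      HasDerivWithinAt Y (A *ᵥ Y t + B *ᵥ u (t - D) + d t) (Set.Ici 0) t) :
    ∀ t ≥ (0 : ℝ),
      HasDerivWithinAt
        (fun t => Y t
          + ∫ s in (t - D)..t, (NormedSpace.exp (((t - s - D : ℝ) : 𝕂) • A)) *ᵥ (B *ᵥ u s))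
        (A *ᵥ (Y t
            + ∫ s in (t - D)..t, (NormedSpace.exp (((t - s - D : ℝ) : 𝕂) • A)) *ᵥ (B *ᵥ u s))
          + (NormedSpace.exp ((-(D : 𝕂)) • A)) *ᵥ (B *ᵥ u t) + d t)
        (Set.Ici 0) t := by
  intro t ht
  have hv : ContinuousOn (fun s => B *ᵥ u s) (Ici (-D)) :=
    (continuous_const.matrix_mulVec continuous_id).comp_continuousOn hu
  refine ((hY t ht).add (hasDerivWithinAt_artsteinIntegral A hD.le hv ht)).congr_deriv ?_
  simp only [artsteinIntegral, mulVec_add]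
  abel

/-- the Artstein transform
`Z(t) = Y(t) + ∫_{t−D}^t e^{(t−s−D)A} B u(s) ds` converts the delayed-input ODE
`Y' = AY + Bu(·−D) + d` into the delay-free ODE `Z' = AZ + e^{−DA}Bu + d` on `ℝ₊`
(derivatives on `ℝ₊` are taken within `Set.Ici 0`). -/
theorem stmt_6 {𝕂 : Type*} [RCLike 𝕂] (N₀ m : ℕ) (D : ℝ) (hD : 0 < D)
    (A : Matrix (Fin N₀) (Fin N₀) 𝕂) (B : Matrix (Fin N₀) (Fin m) 𝕂)
    (Y : ℝ → Fin N₀ → 𝕂) (u : ℝ → Fin m → 𝕂) (d : ℝ → Fin N₀ → 𝕂)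
    (hu : ContinuousOn u (Set.Ici (-D))) (hd : ContinuousOn d (Set.Ici 0))
    (hY : ∀ t ≥ (0 : ℝ),
      HasDerivWithinAt Y (A *ᵥ Y t + B *ᵥ u (t - D) + d t) (Set.Ici 0) t) :
    ∀ t ≥ (0 : ℝ),
      HasDerivWithinAt
        (fun t => Y t
          + ∫ s in (t - D)..t, (NormedSpace.exp (((t - s - D : ℝ) : 𝕂) • A)) *ᵥ (B *ᵥ u s))
        (A *ᵥ (Y t
            + ∫ s in (t - D)..t, (NormedSpace.exp (((t - s - D : ℝ) : 𝕂) • A)) *ᵥ (B *ᵥ u s))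
          + (NormedSpace.exp ((-(D : 𝕂)) • A)) *ᵥ (B *ᵥ u t) + d t)
        (Set.Ici 0) t :=
  stmt_6_general N₀ m D hD A B Y u d hu hY
end

section
/- (Conversion Lemma.) For every σ > 0, M ≥ 1, and ε > 0, there exists δ ∈ (0, σ) such that for all continuous functions φ, y : ℝ₊ → ℝ₊ and every constant γ ≥ 0 satisfying φ(t) ≤ M e^{−σ(t−t₀)} φ(t₀) + γ sup_{t₀ ≤ s ≤ t} y(s) for all t ≥ t₀ ≥ 0, it holds that φ(t) ≤ M e^{−δ t} φ(0) + γ(1+ε) sup_{0 ≤ s ≤ t} e^{−δ(t−s)} y(s) for all t ≥ 0. -/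
open Set

/-!
Fix a window length `L` so large that one window contracts `φ` by `q = M e^{-σL}` with
`q (1 + ε) < ε`, and then `δ` so small that `e^{δL} (1 + q (1 + ε)) ≤ 1 + ε`. On `[0, L]` the
estimate is the ISS bound from `t₀ = 0`. For `t > L`, apply the ISS bound from `t₀ = t - L` and
the estimate at `t - L`: shifting by `L` costs the fading-memory supremum at most a factor
`e^{δL}`, and the choice of `δ` absorbs this loss.
-/

open Filter Topology Real

noncomputable def fadingSup (δ : ℝ) (y : ℝ → ℝ) (t : ℝ) : ℝ :=
  sSup ((fun s => exp (-δ * (t - s)) * y s) '' Icc 0 t)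

section FadingSup

variable {δ : ℝ} {y : ℝ → ℝ}

theorem fadingSup_nonneg (hy₀ : ∀ s, 0 ≤ y s) (t : ℝ) : 0 ≤ fadingSup δ y t :=
  Real.sSup_nonneg <| by
    rintro _ ⟨s, -, rfl⟩
    exact mul_nonneg (exp_pos _).le (hy₀ s)

theorem le_exp_mul_fadingSup (hy : Continuous y) {s t : ℝ} (hs : s ∈ Icc 0 t) :
    y s ≤ exp (δ * (t - s)) * fadingSup δ y t := by
  have hbdd : BddAbove ((fun s => exp (-δ * (t - s)) * y s) '' Icc 0 t) :=
    (isCompact_Icc.image (by fun_prop)).bddAbove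
  have hle : exp (-δ * (t - s)) * y s ≤ fadingSup δ y t := le_csSup hbdd ⟨s, hs, rfl⟩
  calc y s = exp (δ * (t - s)) * (exp (-δ * (t - s)) * y s) := by
        rw [← mul_assoc, ← exp_add]; simp
    _ ≤ exp (δ * (t - s)) * fadingSup δ y t := by gcongr

theorem sSup_image_Icc_le_exp_mul_fadingSup (hy : Continuous y) (hy₀ : ∀ s, 0 ≤ y s)
    (hδ : 0 ≤ δ) {a t L : ℝ} (ha : 0 ≤ a) (hL : t - a ≤ L) :
    sSup (y '' Icc a t) ≤ exp (δ * L) * fadingSup δ y t := by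
  refine Real.sSup_le ?_ (mul_nonneg (exp_pos _).le (fadingSup_nonneg hy₀ t))
  rintro _ ⟨s, hs, rfl⟩
  calc y s ≤ exp (δ * (t - s)) * fadingSup δ y t :=
        le_exp_mul_fadingSup hy ⟨ha.trans hs.1, hs.2⟩
    _ ≤ exp (δ * L) * fadingSup δ y t := by
        gcongr ?_ * _
        · exact fadingSup_nonneg hy₀ t
        · exact exp_le_exp.2 (by nlinarith [hs.1])

theorem fadingSup_sub_le (hy : Continuous y) (hy₀ : ∀ s, 0 ≤ y s) {L : ℝ} (hL : 0 ≤ L)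
    (t : ℝ) : fadingSup δ y (t - L) ≤ exp (δ * L) * fadingSup δ y t := by
  refine Real.sSup_le ?_ (mul_nonneg (exp_pos _).le (fadingSup_nonneg hy₀ t))
  rintro _ ⟨s, hs, rfl⟩
  calc exp (-δ * (t - L - s)) * y s
      ≤ exp (-δ * (t - L - s)) * (exp (δ * (t - s)) * fadingSup δ y t) := by
        gcongr
        exact le_exp_mul_fadingSup hy ⟨hs.1, by linarith [hs.2]⟩
    _ = exp (δ * L) * fadingSup δ y t := by
        rw [← mul_assoc, ← exp_add]; congr 2; ring

end FadingSup

theorem forall_nonneg_of_forall_Icc_of_forall_sub {P : ℝ → Prop} {L : ℝ} (hL : 0 < L)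
    (base : ∀ t ∈ Icc 0 L, P t) (step : ∀ t, L < t → P (t - L) → P t) :
    ∀ t, 0 ≤ t → P t := by
  have windows : ∀ n : ℕ, ∀ t ∈ Icc 0 ((n + 1) * L), P t := by
    intro n
    induction n with
    | zero => simpa using base
    | succ n ih =>
      intro t ht
      rcases le_or_gt t L with htL | htL
      · exact base t ⟨ht.1, htL⟩
      · refine step t htL (ih _ ⟨by linarith, ?_⟩)
        have := ht.2
        push_cast at this
        linarith
  intro t ht
  obtain ⟨n, hn⟩ := exists_nat_ge (t / L)
  exact windows n t ⟨ht, by rw [div_le_iff₀ hL] at hn; nlinarith⟩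

theorem exists_window_and_rate {σ ε : ℝ} (M : ℝ) (hσ : 0 < σ) (hε : 0 < ε) :
    ∃ L > 0, ∃ δ ∈ Ioo 0 σ, exp (δ * L) * (1 + M * exp (-σ * L) * (1 + ε)) ≤ 1 + ε := by
  have hdecay : Tendsto (fun L => M * exp (-σ * L) * (1 + ε)) atTop (𝓝 0) := by
    have := tendsto_exp_atBot.comp (tendsto_id.const_mul_atTop_of_neg (neg_neg_of_pos hσ))
    simpa using (this.const_mul M).mul_const (1 + ε)
  obtain ⟨L, hq, hL⟩ :=
    ((hdecay.eventually_lt_const hε).and (eventually_gt_atTop 0)).exists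
  have hcont : Tendsto (fun δ => exp (δ * L) * (1 + M * exp (-σ * L) * (1 + ε))) (𝓝[>] 0)
      (𝓝 (1 + M * exp (-σ * L) * (1 + ε))) := by
    refine tendsto_nhdsWithin_of_tendsto_nhds ?_
    simpa using ((continuous_exp.comp (continuous_mul_const L)).mul_const _).tendsto 0
  obtain ⟨δ, hδ, hδσ⟩ :=
    ((hcont.eventually_lt_const (u := 1 + ε) (by linarith)).and (Ioo_mem_nhdsGT hσ)).exists
  exact ⟨L, hL, δ, hδσ, hδ.le⟩

def UniformISS (σ M γ : ℝ) (φ y : ℝ → ℝ) : Prop :=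
  ∀ t₀ ≥ (0 : ℝ), ∀ t ≥ t₀, φ t ≤ M * exp (-σ * (t - t₀)) * φ t₀ + γ * sSup (y '' Icc t₀ t)

theorem UniformISS.le_fadingSup {σ M γ ε δ L : ℝ} {φ y : ℝ → ℝ} (H : UniformISS σ M γ φ y)
    (hy : Continuous y) (hφ₀ : ∀ t, 0 ≤ φ t) (hy₀ : ∀ t, 0 ≤ y t) (hM : 0 ≤ M) (hγ : 0 ≤ γ)
    (hε : 0 ≤ ε) (hδ : 0 ≤ δ) (hδσ : δ ≤ σ) (hL : 0 < L)
    (hwindow : exp (δ * L) * (1 + M * exp (-σ * L) * (1 + ε)) ≤ 1 + ε) :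
    ∀ t ≥ 0, φ t ≤ M * exp (-δ * t) * φ 0 + γ * (1 + ε) * fadingSup δ y t := by
  set q := M * exp (-σ * L)
  set E := exp (δ * L)
  have hE : 1 ≤ E := one_le_exp (by positivity)
  have hq : 0 ≤ q := by positivity
  have hqε : 0 ≤ q * (1 + ε) := mul_nonneg hq (by linarith)
  have hEε : E ≤ 1 + ε := by nlinarith
  -- `q E (1 + ε) ≤ 1 + ε - E ≤ ε`
  have hqE : q * E ≤ 1 := by nlinarith
  refine forall_nonneg_of_forall_Icc_of_forall_sub hL (fun t ht => ?_) (fun t htL ih => ?_)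
  · have hS : sSup (y '' Icc 0 t) ≤ E * fadingSup δ y t :=
      sSup_image_Icc_le_exp_mul_fadingSup hy hy₀ hδ le_rfl (by linarith [ht.2])
    calc φ t ≤ M * exp (-σ * (t - 0)) * φ 0 + γ * sSup (y '' Icc 0 t) := H 0 le_rfl t ht.1
      _ ≤ M * exp (-δ * t) * φ 0 + γ * (E * fadingSup δ y t) := by
          gcongr M * ?_ * _ + γ * ?_
          · exact hφ₀ 0
          · exact exp_le_exp.2 (by nlinarith [ht.1])
      _ ≤ M * exp (-δ * t) * φ 0 + γ * ((1 + ε) * fadingSup δ y t) := by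
          gcongr
          exact fadingSup_nonneg hy₀ t
      _ = _ := by ring
  · have hwin : φ t ≤ q * φ (t - L) + γ * sSup (y '' Icc (t - L) t) := by
      have := H (t - L) (by linarith) t (by linarith)
      rwa [sub_sub_cancel] at this
    have hS : sSup (y '' Icc (t - L) t) ≤ E * fadingSup δ y t :=
      sSup_image_Icc_le_exp_mul_fadingSup hy hy₀ hδ (by linarith) (by linarith)
    have hexp : exp (-δ * (t - L)) = E * exp (-δ * t) := by
      rw [← exp_add]; congr 1; ring
    have hprev : φ (t - L) ≤ E * (M * exp (-δ * t) * φ 0 + γ * (1 + ε) * fadingSup δ y t) :=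
      calc φ (t - L) ≤ M * exp (-δ * (t - L)) * φ 0 + γ * (1 + ε) * fadingSup δ y (t - L) := ih
        _ ≤ M * (E * exp (-δ * t)) * φ 0 + γ * (1 + ε) * (E * fadingSup δ y t) := by
            rw [hexp]; gcongr; exact fadingSup_sub_le hy hy₀ hL.le t
        _ = _ := by ring
    have hV := fadingSup_nonneg (δ := δ) hy₀ t
    have hA : 0 ≤ M * exp (-δ * t) * φ 0 := mul_nonneg (by positivity) (hφ₀ 0)
    calc φ t ≤ q * φ (t - L) + γ * sSup (y '' Icc (t - L) t) := hwin
      _ ≤ q * (E * (M * exp (-δ * t) * φ 0 + γ * (1 + ε) * fadingSup δ y t))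
          + γ * (E * fadingSup δ y t) := by gcongr
      _ = q * E * (M * exp (-δ * t) * φ 0)
          + γ * fadingSup δ y t * (E * (1 + q * (1 + ε))) := by ring
      _ ≤ 1 * (M * exp (-δ * t) * φ 0) + γ * fadingSup δ y t * (1 + ε) :=
          add_le_add (mul_le_mul_of_nonneg_right hqE hA)
            (mul_le_mul_of_nonneg_left hwindow (mul_nonneg hγ hV))
      _ = _ := by ring

/-- the Conversion Lemma (uniform ISS estimate into fading memory estimate). -/
theorem stmt_10 :
    ∀ σ M ε : ℝ, 0 < σ → 1 ≤ M → 0 < ε →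
      ∃ δ ∈ Ioo 0 σ,
        ∀ φ y : ℝ → ℝ, Continuous φ → Continuous y →
          (∀ t, 0 ≤ φ t) → (∀ t, 0 ≤ y t) →
          ∀ γ : ℝ, 0 ≤ γ →
          (∀ t₀ ≥ (0 : ℝ), ∀ t ≥ t₀,
            φ t ≤ M * Real.exp (-σ * (t - t₀)) * φ t₀ + γ * sSup (y '' Icc t₀ t)) →
          ∀ t ≥ (0 : ℝ),
            φ t ≤ M * Real.exp (-δ * t) * φ 0
              + γ * (1 + ε) * sSup ((fun s => Real.exp (-δ * (t - s)) * y s) '' Icc 0 t) := by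
  intro σ M ε hσ hM hε
  obtain ⟨L, hL, δ, hδ, hwindow⟩ := exists_window_and_rate M hσ hε
  refine ⟨δ, hδ, fun φ y _ hy hφ₀ hy₀ γ hγ H t ht => ?_⟩
  exact UniformISS.le_fadingSup H hy hφ₀ hy₀ (by linarith) hγ hε.le hδ.1.le hδ.2.le hL hwindow
    t ht
end
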